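/- An R[F]-module M over an F_p-algebra R is unit if and only if the base change R_perf ⊗_R M, viewed as a module over R_perf[F], has F acting bijectively, where R_perf = colim_φ R is the direct limit perfection. (For the 'only if' direction assume the Frobenius of R is flat; the perfection map R → R_perf is then faithfully flat over the relevant twist.) -/

import Mathlib

/-
The direct limit perfection `S` of `R` is the colimit of `R → R → ⋯` along `φ`. When `φ` is
flat this is a filtered colimit of flat `R`-modules, so `S` is flat: a relation among elements of
`S` lifts to one twist `R_{φⁿ}` of `R`, where it holds after applying some `φᵏ`. It is even
faithfully flat: if `1 = ∑ cᵢ aᵢ` with `aᵢ ∈ I`, raising to a large `pⁿ` writes `1` as the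
image of an element of `I`, and the kernel of `R → S` is nil, so `I` contains a unit.

Via `a ↦ a^{1/p}`, `S` is an algebra over the Frobenius twist `R' = Rphi p R` lying over `R`.
Up to the bijection `S ⊗_{R'} M ≅ S ⊗_R M`, `s ⊗ m ↦ s ^ p ⊗ m`, the operator `F'` is the base
change to `S` of the linearization `φ*M → M`. Since `S` is also a perfect closure of `R'`, it is
faithfully flat over `R'`, so `F'` is bijective if and only if the linearization is.
-/

universe u v

open scoped TensorProduct

/-- A copy of `R` viewed as an `R`-algebra via the Frobenius `φ : R → R`, so that
`Rphi p R ⊗[R] M` is the Frobenius base change `φ*M`. -/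
def Rphi (_p : ℕ) (R : Type u) : Type u := R

instance Rphi.instCommRing (p : ℕ) (R : Type u) [CommRing R] : CommRing (Rphi p R) :=
  ‹CommRing R›

noncomputable instance Rphi.instAlgebra (p : ℕ) (R : Type u) [CommRing R] [Fact p.Prime]
    [CharP R p] : Algebra R (Rphi p R) :=
  RingHom.toAlgebra (S := Rphi p R) (frobenius R p)

/-- A unit `R[F]`-module structure: the linearization `φ*M → M`, `a ⊗ m ↦ a • F m`, is an
isomorphism. -/
def UnitFModule (p : ℕ) (R : Type u) (M : Type v) [Fact p.Prime] [CommRing R] [CharP R p]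
    [AddCommGroup M] [Module R M] (F : M → M) : Prop :=
  ∃ Fs : (Rphi p R) ⊗[R] M →+ M,
    (∀ (a : R) (m : M), Fs ((show Rphi p R from a) ⊗ₜ[R] m) = a • F m) ∧
    Function.Bijective Fs

instance Rphi.instCharP (p : ℕ) (R : Type u) [CommRing R] [CharP R p] : CharP (Rphi p R) p :=
  ‹CharP R p›

theorem IsPRadical.pow_mem_of_finite {K L : Type*} [CommSemiring K] [CommSemiring L]
    (i : K →+* L) (p : ℕ) [IsPRadical i p] {ι : Type*} [Finite ι] (x : ι → L) :
    ∃ (n : ℕ) (y : ι → K), ∀ j, i (y j) = x j ^ p ^ n := by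
  choose n y hy using fun j => IsPRadical.pow_mem i p (x j)
  obtain ⟨N, hN⟩ := Finite.bddAbove_range n
  have hle : ∀ j, n j ≤ N := fun j => hN ⟨j, rfl⟩
  refine ⟨N, fun j => y j ^ p ^ (N - n j), fun j => ?_⟩
  rw [map_pow, hy, ← pow_mul, ← pow_add, Nat.add_sub_cancel' (hle j)]

theorem IsPRadical.eq_top_of_map_eq_top {K L : Type*} [CommRing K] [CommRing L]
    (i : K →+* L) (p : ℕ) [ExpChar L p] [IsPRadical i p] {I : Ideal K}
    (hI : I.map i = ⊤) : I = ⊤ := by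
  obtain ⟨k, c, g, hsum⟩ :=
    Submodule.mem_span_set'.mp (hI ▸ Submodule.mem_top : (1 : L) ∈ I.map i)
  choose a haI hag using fun j => (g j).2
  obtain ⟨n, r, hr⟩ := IsPRadical.pow_mem_of_finite i p c
  set b := ∑ j, r j * a j ^ p ^ n
  have hb : i b = 1 := by
    simp only [b, map_sum, map_mul, map_pow, hr, hag, ← mul_pow]
    rw [← sum_pow_char_pow]
    simp only [← smul_eq_mul, hsum, one_pow]
  have hbI : b ∈ I := I.sum_mem fun j _ =>
    I.mul_mem_left _ (I.pow_mem_of_mem (haI j) _ (pow_pos (expChar_pos L p) n))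
  have hnil : IsNilpotent (1 - b) := pNilradical_le_nilradical
    (IsPRadical.ker_le i p (by rw [RingHom.mem_ker, map_sub, map_one, hb, sub_self]))
  exact I.eq_top_of_isUnit_mem hbI (by simpa using hnil.isUnit_one_sub)

theorem Module.Flat.of_forall_exists_lift {R M : Type*} [CommRing R] [AddCommGroup M]
    [Module R M] {ι : Type*} (N : ι → Type*) [∀ i, AddCommGroup (N i)] [∀ i, Module R (N i)]
    [∀ i, Module.Flat R (N i)] (τ : ∀ i, N i →ₗ[R] M)
    (h : ∀ {l : ℕ} {f : Fin l →₀ R} {x : (Fin l →₀ R) →ₗ[R] M}, x f = 0 →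
      ∃ i, ∃ x' : (Fin l →₀ R) →ₗ[R] N i, τ i ∘ₗ x' = x ∧ x' f = 0) :
    Module.Flat R M := by
  refine Module.Flat.of_forall_exists_factorization fun {l f x} hx => ?_
  obtain ⟨i, x', rfl, hx'⟩ := h hx
  obtain ⟨k, a, y, rfl, ha⟩ := Module.Flat.iff_forall_exists_factorization.mp inferInstance hx'
  exact ⟨k, a, τ i ∘ₗ y, rfl, ha⟩

/-- `R` as an `R`-algebra via `φⁿ`. The perfection is the colimit of these along
`x ↦ x ^ p : RphiIter p n R → RphiIter p (n + 1) R`. -/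
def RphiIter (_p _n : ℕ) (R : Type u) : Type u := R

instance RphiIter.instCommRing (p n : ℕ) (R : Type u) [CommRing R] :
    CommRing (RphiIter p n R) :=
  ‹CommRing R›

noncomputable instance RphiIter.instAlgebra (p n : ℕ) (R : Type u) [CommRing R] [Fact p.Prime]
    [CharP R p] : Algebra R (RphiIter p n R) :=
  RingHom.toAlgebra (S := RphiIter p n R) (iterateFrobenius R p n)

section Flat

variable (p : ℕ) [Fact p.Prime] (R : Type u) [CommRing R] [CharP R p]

theorem RingHom.flat_iterateFrobenius [Module.Flat R (Rphi p R)] (n : ℕ) :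
    (iterateFrobenius R p n).Flat := by
  induction n with
  | zero =>
    convert RingHom.Flat.id R
    ext x
    simp
  | succ n ih =>
    have hφ : (frobenius R p).Flat := RingHom.flat_algebraMap_iff.mpr ‹Module.Flat R (Rphi p R)›
    convert ih.comp hφ
    ext x
    simp [iterateFrobenius_def, frobenius_def, pow_succ, pow_mul]

instance RphiIter.flat [Module.Flat R (Rphi p R)] (n : ℕ) : Module.Flat R (RphiIter p n R) :=
  RingHom.flat_algebraMap_iff.mp (RingHom.flat_iterateFrobenius p R n)

variable (S : Type v) [CommRing S] [Algebra R S] [CharP S p] [PerfectRing S p]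

noncomputable def RphiIter.rootHom (n : ℕ) : RphiIter p n R →ₐ[R] S :=
  { (iterateFrobeniusEquiv S p n).symm.toRingHom.comp (algebraMap R S) with
    commutes' r := (iterateFrobeniusEquiv S p n).symm_apply_eq.mpr <| by
      change algebraMap R S (r ^ p ^ n) = _
      rw [map_pow, iterateFrobeniusEquiv_def] }

theorem RphiIter.rootHom_apply (n : ℕ) (x : R) :
    RphiIter.rootHom p R S n x = (iterateFrobeniusEquiv S p n).symm (algebraMap R S x) := rfl

theorem RphiIter.rootHom_eq_zero_iff {n : ℕ} {x : RphiIter p n R} :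
    RphiIter.rootHom p R S n x = 0 ↔ x ∈ RingHom.ker (algebraMap R S) :=
  (map_eq_zero_iff (iterateFrobeniusEquiv S p n).symm (RingEquiv.injective _)).trans
    RingHom.mem_ker.symm

noncomputable def RphiIter.powHom (n k : ℕ) : RphiIter p n R →ₐ[R] RphiIter p (n + k) R :=
  { iterateFrobenius R p k with
    commutes' r := by
      change (r ^ p ^ n) ^ p ^ k = r ^ p ^ (n + k)
      rw [← pow_mul, ← pow_add] }

theorem RphiIter.rootHom_comp_powHom (n k : ℕ) :
    (RphiIter.rootHom p R S (n + k)).comp (RphiIter.powHom p R n k) =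
      RphiIter.rootHom p R S n := by
  ext (x : R)
  change (iterateFrobeniusEquiv S p (n + k)).symm (algebraMap R S (x ^ p ^ k)) =
    (iterateFrobeniusEquiv S p n).symm (algebraMap R S x)
  rw [map_pow, iterateFrobeniusEquiv_symm_add_apply, ← iterateFrobeniusEquiv_def,
    RingEquiv.symm_apply_apply]

theorem Module.Flat.of_isPerfectClosure [Module.Flat R (Rphi p R)]
    [IsPerfectClosure (algebraMap R S) p] : Module.Flat R S := by
  refine Module.Flat.of_forall_exists_lift (fun n => RphiIter p n R)
    (fun n => (RphiIter.rootHom p R S n).toLinearMap) fun {l f x} hx => ?_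
  obtain ⟨n, r, hr⟩ :=
    IsPRadical.pow_mem_of_finite (algebraMap R S) p fun i => x (Finsupp.single i 1)
  let x₀ : (Fin l →₀ R) →ₗ[R] RphiIter p n R :=
    Finsupp.linearCombination R fun i => (show RphiIter p n R from r i)
  have hx₀ : (RphiIter.rootHom p R S n).toLinearMap ∘ₗ x₀ = x := by
    refine Finsupp.basisSingleOne.ext fun i => ?_
    rw [Finsupp.coe_basisSingleOne, LinearMap.comp_apply, Finsupp.linearCombination_single,
      one_smul, AlgHom.toLinearMap_apply, RphiIter.rootHom_apply, hr,
      ← iterateFrobeniusEquiv_def, RingEquiv.symm_apply_apply]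
  obtain ⟨k, hk⟩ : ∃ k, x₀ f ^ p ^ k = 0 := by
    refine mem_pNilradical.mp (IsPRadical.ker_le (algebraMap R S) p ?_)
    have h0 : RphiIter.rootHom p R S n (x₀ f) = 0 := by rw [← hx, ← hx₀]; rfl
    rwa [RphiIter.rootHom_eq_zero_iff] at h0
  refine ⟨n + k, (RphiIter.powHom p R n k).toLinearMap ∘ₗ x₀, ?_, hk⟩
  rw [← LinearMap.comp_assoc, ← AlgHom.comp_toLinearMap, RphiIter.rootHom_comp_powHom, hx₀]

theorem Module.FaithfullyFlat.of_isPerfectClosure [Module.Flat R (Rphi p R)]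
    [IsPerfectClosure (algebraMap R S) p] : Module.FaithfullyFlat R S := by
  refine (Module.FaithfullyFlat.iff_flat_and_ideal_smul_eq_top R S).mpr
    ⟨Module.Flat.of_isPerfectClosure p R S, fun I hI => ?_⟩
  refine IsPRadical.eq_top_of_map_eq_top (algebraMap R S) p ?_
  rwa [Ideal.smul_top_eq_map, Submodule.restrictScalars_eq_top_iff] at hI

end Flat

/-- The structure making `R → Rphi p R → S` a scalar tower: `a ↦ (algebraMap R S a) ^ (1 / p)`.
Not a global instance, as it would clash with `Algebra.id` when `S = Rphi p R`. -/
noncomputable abbrev Rphi.algebraOfPerfect (p : ℕ) [Fact p.Prime] (R : Type u) [CommRing R]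
    [CharP R p] (S : Type v) [CommRing S] [Algebra R S] [CharP S p] [PerfectRing S p] :
    Algebra (Rphi p R) S :=
  ((frobeniusEquiv S p).symm.toRingHom.comp (algebraMap R S)).toAlgebra

attribute [local instance] Rphi.algebraOfPerfect

/-- `M` as a module over `Rphi p R = R`; as an `R`-module, `r` acts on it by `r ^ p`, so
`R`-linear maps `M → RphiModule p R M` are the `p`-semilinear endomorphisms of `M`. -/
def RphiModule (_p : ℕ) (_R : Type u) (M : Type v) : Type v := M

section RphiModule

variable (p : ℕ) [Fact p.Prime] (R : Type u) [CommRing R] [CharP R p]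
variable (M : Type v) [AddCommGroup M] [Module R M]

instance RphiModule.instAddCommGroup : AddCommGroup (RphiModule p R M) := ‹AddCommGroup M›

instance RphiModule.instModuleRphi : Module (Rphi p R) (RphiModule p R M) := ‹Module R M›

noncomputable instance RphiModule.instModule : Module R (RphiModule p R M) :=
  Module.compHom _ (algebraMap R (Rphi p R))

instance RphiModule.instIsScalarTower : IsScalarTower R (Rphi p R) (RphiModule p R M) :=
  IsScalarTower.of_algebraMap_smul fun _ _ => rfl

def RphiModule.of : M ≃+ RphiModule p R M := AddEquiv.refl M

theorem unitFModule_iff_bijective_liftBaseChange (F : M →ₗ[R] RphiModule p R M) :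
    UnitFModule p R M F ↔ Function.Bijective (F.liftBaseChange (Rphi p R)) := by
  refine ⟨fun ⟨Fs, hFs, hbij⟩ => ?_, fun h => ⟨(F.liftBaseChange (Rphi p R)).toAddMonoidHom,
    fun _ _ => rfl, h⟩⟩
  have hFs_eq : ∀ z, Fs z = F.liftBaseChange (Rphi p R) z := fun z => by
    induction z using TensorProduct.induction_on with
    | zero => exact (map_zero Fs).trans (map_zero _).symm
    | tmul a m => exact hFs a m
    | add x y hx hy => exact (map_add Fs x y).trans (hx ▸ hy ▸ (map_add _ x y).symm)
  exact funext hFs_eq ▸ hbij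

end RphiModule

section Perfect

variable (p : ℕ) [Fact p.Prime] (R : Type u) [CommRing R] [CharP R p]
variable (S : Type v) [CommRing S] [Algebra R S] [CharP S p] [PerfectRing S p]

theorem Rphi.algebraMap_apply_of_perfect (a : Rphi p R) :
    algebraMap (Rphi p R) S a = (frobeniusEquiv S p).symm (algebraMap R S a) := rfl

instance Rphi.isScalarTower_of_perfect : IsScalarTower R (Rphi p R) S :=
  IsScalarTower.of_algebraMap_eq fun r => by
    change _ = (frobeniusEquiv S p).symm (algebraMap R S (r ^ p))
    rw [map_pow, frobeniusEquiv_symm_pow]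

instance Rphi.isPerfectClosure_of_perfect [IsPerfectClosure (algebraMap R S) p] :
    IsPerfectClosure (algebraMap (Rphi p R) S) p where
  pow_mem' s := by
    obtain ⟨n, y, hy⟩ := IsPRadical.pow_mem (algebraMap R S) p (s ^ p)
    refine ⟨n, y, ?_⟩
    change (frobeniusEquiv S p).symm (algebraMap R S y) = _
    rw [hy, ← pow_mul, mul_comm, pow_mul, frobeniusEquiv_symm_pow]
  ker_le' y hy := by
    refine IsPRadical.ker_le (algebraMap R S) p ?_
    rwa [RingHom.mem_ker, Rphi.algebraMap_apply_of_perfect,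
      map_eq_zero_iff _ (RingEquiv.injective _)] at hy

instance Rphi.faithfullyFlat_of_perfect [Module.Flat R (Rphi p R)]
    [IsPerfectClosure (algebraMap R S) p] : Module.FaithfullyFlat (Rphi p R) S :=
  have : Module.Flat (Rphi p R) (Rphi p (Rphi p R)) := ‹Module.Flat R (Rphi p R)›
  Module.FaithfullyFlat.of_isPerfectClosure p (Rphi p R) S

variable (M : Type v) [AddCommGroup M] [Module R M]

open TensorProduct in
noncomputable def frobeniusTensorEquiv : S ⊗[Rphi p R] RphiModule p R M ≃+ S ⊗[R] M where
  toFun := liftAddHom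
    (AddMonoidHom.mk' (fun s => (TensorProduct.mk R S M (s ^ p)).toAddMonoidHom.comp
      (RphiModule.of p R M).symm.toAddMonoidHom) fun s t => by
        ext m
        simp [add_pow_char])
    fun a s m => by
      change ((a • s) ^ p) ⊗ₜ[R] (RphiModule.of p R M).symm m =
        (s ^ p) ⊗ₜ[R] ((show R from a) • (RphiModule.of p R M).symm m)
      rw [Algebra.smul_def, mul_pow, Rphi.algebraMap_apply_of_perfect, frobeniusEquiv_symm_pow_p]
      erw [← Algebra.smul_def, smul_tmul]
  invFun := liftAddHom
    (AddMonoidHom.mk' (fun s => (TensorProduct.mk (Rphi p R) S (RphiModule p R M)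
      ((frobeniusEquiv S p).symm s)).toAddMonoidHom.comp (RphiModule.of p R M).toAddMonoidHom)
      fun s t => by
        ext m
        simp)
    fun r s m => by
      change (frobeniusEquiv S p).symm (r • s) ⊗ₜ[Rphi p R] RphiModule.of p R M m =
        (frobeniusEquiv S p).symm s ⊗ₜ[Rphi p R]
          ((show Rphi p R from r) • RphiModule.of p R M m)
      rw [Algebra.smul_def, map_mul]
      erw [← Rphi.algebraMap_apply_of_perfect, ← Algebra.smul_def, smul_tmul]
  left_inv z := by
    induction z using TensorProduct.induction_on with
    | zero => simp
    | tmul s m => simp [frobeniusEquiv_symm_pow]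
    | add x y hx hy => simp_all
  right_inv z := by
    induction z using TensorProduct.induction_on with
    | zero => simp
    | tmul s m => simp [frobeniusEquiv_symm_pow_p]
    | add x y hx hy => simp_all
  map_add' := map_add _

open TensorProduct in
noncomputable def frobeniusBaseChange (F : M →ₗ[R] RphiModule p R M) : S ⊗[R] M →+ S ⊗[R] M :=
  (frobeniusTensorEquiv p R S M).toAddMonoidHom.comp <|
    ((F.liftBaseChange (Rphi p R)).lTensor S).toAddMonoidHom.comp
      (AlgebraTensorModule.cancelBaseChange R (Rphi p R) S S M).symm.toLinearMap.toAddMonoidHom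

theorem frobeniusBaseChange_tmul (F : M →ₗ[R] RphiModule p R M) (s : S) (m : M) :
    frobeniusBaseChange p R S M F (s ⊗ₜ m) = (s ^ p) ⊗ₜ (RphiModule.of p R M).symm (F m) := by
  simp [frobeniusBaseChange, frobeniusTensorEquiv]

theorem bijective_frobeniusBaseChange_iff [Module.Flat R (Rphi p R)]
    [IsPerfectClosure (algebraMap R S) p] (F : M →ₗ[R] RphiModule p R M) :
    Function.Bijective (frobeniusBaseChange p R S M F) ↔
      Function.Bijective (F.liftBaseChange (Rphi p R)) := by
  simp only [frobeniusBaseChange, AddMonoidHom.coe_comp, AddEquiv.coe_toAddMonoidHom,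
    LinearMap.toAddMonoidHom_coe, LinearEquiv.coe_coe, EquivLike.comp_bijective,
    EquivLike.bijective_comp, Module.FaithfullyFlat.lTensor_bijective_iff_bijective]

end Perfect

/-- Let `R` be an `F_p`-algebra with flat Frobenius, and `S = R_perf` the
direct limit perfection of `R` (characterized abstractly: `S` is a perfect `R`-algebra such
that a `p`-power of every element of `S` lies in the image of `R`, and an element of `R`
maps to `0` in `S` iff a `p`-power of it vanishes).  Then an `R[F]`-module `(M, F)` is unit
if and only if `F` acts bijectively on the base change `S ⊗_R M` (where the induced
semilinear operator `F'` is determined by `F' (s ⊗ m) = s^p ⊗ F m`). -/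
theorem stmt15 (p : ℕ) [Fact p.Prime] (R : Type u) [CommRing R] [CharP R p]
    [Module.Flat R (Rphi p R)]
    (S : Type u) [CommRing S] [Algebra R S] [CharP S p] [PerfectRing S p]
    (hexh : ∀ s : S, ∃ n : ℕ, s ^ p ^ n ∈ (algebraMap R S).range)
    (hker : ∀ a : R, algebraMap R S a = 0 ↔ ∃ n : ℕ, a ^ p ^ n = 0)
    (M : Type u) [AddCommGroup M] [Module R M] (F : M → M)
    (hFadd : ∀ x y, F (x + y) = F x + F y)
    (hFsemi : ∀ (r : R) (m : M), F (r • m) = r ^ p • F m)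
    (F' : S ⊗[R] M → S ⊗[R] M)
    (hF'add : ∀ x y, F' (x + y) = F' x + F' y)
    (hF' : ∀ (s : S) (m : M), F' (s ⊗ₜ[R] m) = (s ^ p) ⊗ₜ[R] F m) :
    UnitFModule p R M F ↔ Function.Bijective F' := by
  have : IsPerfectClosure (algebraMap R S) p :=
    { pow_mem' := fun s => by
        obtain ⟨n, y, hy⟩ := hexh s
        exact ⟨n, y, hy⟩
      ker_le' := fun a ha => mem_pNilradical.mpr ((hker a).mp ha) }
  let Flin : M →ₗ[R] RphiModule p R M :=
    { toFun := RphiModule.of p R M ∘ F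
      map_add' := hFadd
      map_smul' := hFsemi }
  have hF'_eq : F' = frobeniusBaseChange p R S M Flin := funext fun z => by
    induction z using TensorProduct.induction_on with
    | zero => simpa using hF'add 0 0
    | tmul s m => exact (hF' s m).trans (frobeniusBaseChange_tmul p R S M Flin s m).symm
    | add x y hx hy => rw [hF'add, hx, hy, map_add]
  rw [hF'_eq, bijective_frobeniusBaseChange_iff]
  exact unitFModule_iff_bijective_liftBaseChange p R M Flin
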